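/- Extension of GLS marginal correctness to non-identically distributed proposals: let p^(1), …, p^(K) be probability mass functions on {1,…,N} with p^(k)_i > 0 for all i and k, and sample X^(k) = argmin_{1≤i≤N} S_i^(k)/p^(k)_i for each k, while Y = argmin_{1≤i≤N} min_{1≤k≤K} S_i^(k)/q_i as before. Then Pr[X^(k) = j] = p^(k)_j for all k ∈ {1,…,K} and j ∈ {1,…,N}, and Pr[Y = j] = q_j for all j ∈ {1,…,N}. -/

import Mathlib

/-! Dividing a rate-`1` exponential by `c` gives rate `c`, and the minimum of independent
exponentials is exponential with the sum of the rates. Hence, for fixed `k`, the scores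
`S i k / p k i` are independent exponentials with rates `p k i`, and the scores
`(min_k S i k) / q i` are independent (they depend on disjoint blocks of `S`) exponentials with
rates `K * q i`. In a race of independent exponentials with rates `r i`, the score of `j` competes
with the minimum of the others, an independent exponential with rate `∑_{i ≠ j} r i`, so `j` wins
with probability `r j / ∑ i, r i`. -/

open MeasureTheory ProbabilityTheory Set Real

lemma lt_ciInf_iff_of_finite {α ι : Type*} [ConditionallyCompleteLinearOrder α] [Finite ι]
    [Nonempty ι] {f : ι → α} {a : α} : a < ⨅ i, f i ↔ ∀ i, a < f i := by
  refine ⟨fun h i => h.trans_le (ciInf_le (Finite.bddBelow_range f) i), fun h => ?_⟩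
  obtain ⟨i, hi⟩ := exists_eq_ciInf_of_finite (f := f)
  exact hi ▸ h i

namespace ProbabilityTheory

lemma expMeasure_Ioi {r : ℝ} (hr : 0 < r) (t : ℝ) :
    expMeasure r (Ioi t) = ENNReal.ofReal (exp (-(r * max t 0))) := by
  have := isProbabilityMeasure_expMeasure hr
  rw [← compl_Iic, prob_compl_eq_one_sub measurableSet_Iic, ← ofReal_cdf, cdf_expMeasure_eq hr]
  split_ifs with ht
  · have : exp (-(r * t)) ≤ 1 := exp_le_one_iff.mpr (by nlinarith)
    rw [max_eq_left ht, ENNReal.ofReal_sub _ (exp_nonneg _), ENNReal.ofReal_one,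
      ENNReal.sub_sub_cancel ENNReal.one_ne_top (ENNReal.ofReal_le_one.mpr this)]
  · simp [max_eq_right (not_le.mp ht).le]

lemma eq_expMeasure_of_measure_Ioi {ν : Measure ℝ} [IsProbabilityMeasure ν] {r : ℝ} (hr : 0 < r)
    (h : ∀ t, ν (Ioi t) = ENNReal.ofReal (exp (-(r * max t 0)))) : ν = expMeasure r := by
  have := isProbabilityMeasure_expMeasure hr
  refine Measure.ext_of_Iic _ _ fun t => ?_
  rw [← compl_Ioi, prob_compl_eq_one_sub measurableSet_Ioi, prob_compl_eq_one_sub measurableSet_Ioi,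
    h, expMeasure_Ioi hr]

lemma map_eq_expMeasure_iff {Ω : Type*} [MeasurableSpace Ω] {μ : Measure Ω}
    [IsProbabilityMeasure μ] {T : Ω → ℝ} (hT : Measurable T) {r : ℝ} (hr : 0 < r) :
    μ.map T = expMeasure r ↔ ∀ t, μ {ω | t < T ω} = ENNReal.ofReal (exp (-(r * max t 0))) := by
  have := Measure.isProbabilityMeasure_map (μ := μ) hT.aemeasurable
  refine ⟨fun h t => ?_, fun h => eq_expMeasure_of_measure_Ioi hr fun t => ?_⟩
  · rw [← expMeasure_Ioi hr, ← h, Measure.map_apply hT measurableSet_Ioi]; rfl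
  · rw [Measure.map_apply hT measurableSet_Ioi]; exact h t

lemma expMeasure_map_div_const {r c : ℝ} (hr : 0 < r) (hc : 0 < c) :
    (expMeasure r).map (· / c) = expMeasure (r * c) := by
  have := isProbabilityMeasure_expMeasure hr
  have hm : Measurable (· / c : ℝ → ℝ) := measurable_id.div_const c
  rw [map_eq_expMeasure_iff hm (mul_pos hr hc)]
  intro t
  have : {x : ℝ | t < x / c} = Ioi (t * c) := by ext x; simp [lt_div_iff₀ hc]
  have hmax : max (t * c) 0 = max t 0 * c := by rw [max_mul_of_nonneg _ _ hc.le, zero_mul]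
  rw [this, expMeasure_Ioi hr, hmax, mul_left_comm, mul_comm (max t 0)]

variable {Ω : Type*} [MeasurableSpace Ω] {μ : Measure Ω}

lemma map_div_const_eq_expMeasure {T : Ω → ℝ} (hT : Measurable T) {r c : ℝ} (hr : 0 < r)
    (hc : 0 < c) (hlaw : μ.map T = expMeasure r) :
    μ.map (fun ω => T ω / c) = expMeasure (r * c) := by
  rw [← expMeasure_map_div_const hr hc, ← hlaw, Measure.map_map (by fun_prop) hT]
  rfl

lemma iIndepFun.map_iInf_eq_expMeasure {ι : Type*} [Fintype ι] [Nonempty ι] {T : ι → Ω → ℝ}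
    (hind : iIndepFun T μ) (hT : ∀ i, Measurable (T i)) {r : ι → ℝ} (hr : ∀ i, 0 < r i)
    (hlaw : ∀ i, μ.map (T i) = expMeasure (r i)) :
    μ.map (fun ω => ⨅ i, T i ω) = expMeasure (∑ i, r i) := by
  have := hind.isProbabilityMeasure
  rw [map_eq_expMeasure_iff (Measurable.iInf hT) (Finset.sum_pos (fun i _ => hr i)
    Finset.univ_nonempty)]
  intro t
  have hevent : {ω | t < ⨅ i, T i ω} = ⋂ i, T i ⁻¹' Ioi t := by
    ext ω; simp [lt_ciInf_iff_of_finite]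
  have hsurv i : μ (T i ⁻¹' Ioi t) = ENNReal.ofReal (exp (-(r i * max t 0))) :=
    (map_eq_expMeasure_iff (hT i) (hr i)).mp (hlaw i) t
  rw [hevent, hind.meas_iInter fun i => ⟨Ioi t, measurableSet_Ioi, rfl⟩,
    Finset.prod_congr rfl fun i _ => hsurv i,
    ← ENNReal.ofReal_prod_of_nonneg fun i _ => (exp_nonneg _), ← exp_sum, Finset.sum_mul,
    Finset.sum_neg_distrib]

lemma IndepFun.measure_lt_of_expMeasure [IsFiniteMeasure μ] {U V : Ω → ℝ} (hUV : IndepFun U V μ)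
    (hU : Measurable U) (hV : Measurable V) {a b : ℝ} (ha : 0 < a) (hb : 0 < b)
    (hUa : μ.map U = expMeasure a) (hVb : μ.map V = expMeasure b) :
    μ {ω | U ω < V ω} = ENNReal.ofReal (a / (a + b)) := by
  have := isProbabilityMeasure_expMeasure hb
  have hlt : MeasurableSet {x : ℝ × ℝ | x.1 < x.2} := measurableSet_lt measurable_fst measurable_snd
  have hpdf : ∀ x, exponentialPDF a x * expMeasure b (Ioi x)
      = ENNReal.ofReal (a / (a + b)) * exponentialPDF (a + b) x := by
    intro x
    rcases lt_or_ge x 0 with hx | hx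
    · simp [exponentialPDF_of_neg hx]
    · rw [expMeasure_Ioi hb, exponentialPDF_of_nonneg hx, exponentialPDF_of_nonneg hx,
        max_eq_left hx, ← ENNReal.ofReal_mul (by positivity),
        ← ENNReal.ofReal_mul (by positivity)]
      congr 1
      field_simp
      rw [← exp_add]
      ring_nf
  calc μ {ω | U ω < V ω} = (μ.map fun ω => (U ω, V ω)) {x | x.1 < x.2} := by
        rw [Measure.map_apply (hU.prodMk hV) hlt]; rfl
    _ = ∫⁻ x, expMeasure b (Ioi x) ∂expMeasure a := by
        rw [(indepFun_iff_map_prod_eq_prod_map_map hU.aemeasurable hV.aemeasurable).mp hUV,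
          hUa, hVb, Measure.prod_apply hlt]
        rfl
    _ = ∫⁻ x, exponentialPDF a x * expMeasure b (Ioi x) := by
        refine lintegral_withDensity_eq_lintegral_mul _
          (measurable_exponentialPDFReal a).ennreal_ofReal (Antitone.measurable ?_)
        exact fun x y hxy => measure_mono (Ioi_subset_Ioi hxy)
    _ = ENNReal.ofReal (a / (a + b)) := by
        simp_rw [hpdf]
        rw [lintegral_const_mul' _ _ ENNReal.ofReal_ne_top,
          lintegral_exponentialPDF_eq_one (by positivity), mul_one]

lemma iIndepFun.measure_forall_ne_lt_of_expMeasure {ι : Type*} [Fintype ι] {T : ι → Ω → ℝ}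
    (hind : iIndepFun T μ) (hT : ∀ i, Measurable (T i)) {r : ι → ℝ} (hr : ∀ i, 0 < r i)
    (hlaw : ∀ i, μ.map (T i) = expMeasure (r i)) (j : ι) :
    μ {ω | ∀ i, i ≠ j → T j ω < T i ω} = ENNReal.ofReal (r j / ∑ i, r i) := by
  classical
  have := hind.isProbabilityMeasure
  rcases subsingleton_or_nontrivial ι with _ | _
  · have hevent : {ω | ∀ i, i ≠ j → T j ω < T i ω} = univ := by
      ext ω; simp [Subsingleton.elim _ j]
    rw [hevent, Fintype.sum_subsingleton _ j, div_self (hr j).ne', ENNReal.ofReal_one, measure_univ]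
  set others := Finset.univ.erase j
  obtain ⟨i₀, hi₀⟩ := exists_ne j
  have : Nonempty others := ⟨⟨i₀, Finset.mem_erase.mpr ⟨hi₀, Finset.mem_univ i₀⟩⟩⟩
  set M : Ω → ℝ := fun ω => ⨅ i : others, T i ω
  have hM : Measurable M := Measurable.iInf fun i => hT i
  have hevent : {ω | ∀ i, i ≠ j → T j ω < T i ω} = {ω | T j ω < M ω} := by
    ext ω; simp [M, others, lt_ciInf_iff_of_finite]
  have hlawM : μ.map M = expMeasure (∑ i ∈ others, r i) := by
    rw [← Finset.sum_coe_sort]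
    exact (hind.precomp Subtype.val_injective).map_iInf_eq_expMeasure (fun i => hT i)
      (fun i => hr i) (fun i => hlaw i)
  have hindep : IndepFun (T j) M μ :=
    (hind.indepFun_finset {j} others (by simp [others]) hT).comp
      (φ := fun v : ({j} : Finset ι) → ℝ => v ⟨j, Finset.mem_singleton_self j⟩)
      (ψ := fun v : others → ℝ => ⨅ i, v i)
      (measurable_pi_apply _) (Measurable.iInf measurable_pi_apply)
  rw [hevent, hindep.measure_lt_of_expMeasure (hT j) hM (hr j)
    (Finset.sum_pos (fun i _ => hr i) ⟨i₀, Finset.mem_erase.mpr ⟨hi₀, Finset.mem_univ i₀⟩⟩)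
    (hlaw j) hlawM, Finset.add_sum_erase _ _ (Finset.mem_univ j)]

lemma iIndepFun.curry {ι κ 𝓧 : Type*} [MeasurableSpace 𝓧] {X : ι → κ → Ω → 𝓧}
    (hind : iIndepFun (fun p : ι × κ => X p.1 p.2) μ) (hX : ∀ i j, Measurable (X i j)) :
    iIndepFun (fun i ω => (X i · ω)) μ := by
  have := hind.isProbabilityMeasure
  have : ∀ i j, IsProbabilityMeasure (μ.map (X i j)) :=
    fun i j => Measure.isProbabilityMeasure_map (hX i j).aemeasurable
  rw [iIndepFun_iff_map_fun_eq_infinitePi_map fun i => measurable_pi_lambda _ (hX i)]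
  have hrow i : μ.map (fun ω j => X i j ω) = Measure.infinitePi fun j => μ.map (X i j) :=
    (hind.precomp (Prod.mk_right_injective i)).map_fun_eq_infinitePi_map (hX i)
  have hpair : μ.map (fun ω (p : ι × κ) => X p.1 p.2 ω)
      = Measure.infinitePi fun p : ι × κ => μ.map (X p.1 p.2) :=
    hind.map_fun_eq_infinitePi_map fun p => hX p.1 p.2
  have hmeas : Measurable fun ω (p : ι × κ) => X p.1 p.2 ω :=
    measurable_pi_lambda _ fun p => hX p.1 p.2
  calc μ.map (fun ω i j => X i j ω)
      = (μ.map fun ω (p : ι × κ) => X p.1 p.2 ω).map (MeasurableEquiv.curry ι κ 𝓧) := by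
        rw [Measure.map_map (MeasurableEquiv.measurable _) hmeas]
        rfl
    _ = Measure.infinitePi fun i => μ.map (fun ω j => X i j ω) := by
        rw [hpair, Measure.infinitePi_map_curry fun i j => μ.map (X i j)]
        simp_rw [hrow]

end ProbabilityTheory

lemma MeasureTheory.measure_setOf_eq_of_ae_forall_ne_lt {Ω ι β : Type*} [MeasurableSpace Ω]
    {μ : Measure Ω} [Preorder β] {Z : Ω → ι} {f : ι → Ω → β}
    (h : ∀ᵐ ω ∂μ, ∀ i, i ≠ Z ω → f (Z ω) ω < f i ω) (j : ι) :
    μ {ω | Z ω = j} = μ {ω | ∀ i, i ≠ j → f j ω < f i ω} := by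
  refine measure_congr (h.mono fun ω hω => propext ⟨?_, fun hj => by_contra fun hne => ?_⟩)
  · rintro rfl
    exact hω
  · exact (hj _ hne).asymm (hω j (Ne.symm hne))

theorem gls_marginals_non_identical_proposals_general
    {Ω : Type*} [MeasurableSpace Ω] (μ : Measure Ω)
    (N K : ℕ) (hK : 0 < K)
    (q : Fin N → ℝ) (hq : ∀ i, 0 < q i) (hqsum : ∑ i, q i = 1)
    (p : Fin K → Fin N → ℝ) (hp : ∀ k i, 0 < p k i) (hpsum : ∀ k, ∑ i, p k i = 1)
    (S : Fin N → Fin K → Ω → ℝ) (hSmeas : ∀ i k, Measurable (S i k))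
    (hSindep : iIndepFun
      (fun ik : Fin N × Fin K => S ik.1 ik.2) μ)
    (hSexp : ∀ i k, μ.map (S i k) = expMeasure 1)
    (Y : Ω → Fin N)
    (X : Fin K → Ω → Fin N)
    -- `Y` is a.s. the unique argmin of `i ↦ (min_k S i k) / q i`
    (hY : ∀ᵐ ω ∂μ, ∀ i : Fin N, i ≠ Y ω →
      (⨅ k : Fin K, S (Y ω) k ω) / q (Y ω) < (⨅ k : Fin K, S i k ω) / q i)
    -- each `X k` is a.s. the unique argmin of `i ↦ S i k / p k i`
    (hX : ∀ᵐ ω ∂μ, ∀ k : Fin K, ∀ i : Fin N, i ≠ X k ω →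
      S (X k ω) k ω / p k (X k ω) < S i k ω / p k i) :
    (∀ (k : Fin K) (j : Fin N), μ {ω | X k ω = j} = ENNReal.ofReal (p k j)) ∧
      (∀ j : Fin N, μ {ω | Y ω = j} = ENNReal.ofReal (q j)) := by
  refine ⟨fun k j => ?_, fun j => ?_⟩
  · have hlaw i : μ.map (fun ω => S i k ω / p k i) = expMeasure (p k i) := by
      simpa using map_div_const_eq_expMeasure (hSmeas i k) one_pos (hp k i) (hSexp i k)
    have hind : iIndepFun (fun i ω => S i k ω / p k i) μ :=
      (hSindep.precomp (Prod.mk_left_injective k)).comp (fun i x => x / p k i)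
        fun i => measurable_id.div_const _
    rw [measure_setOf_eq_of_ae_forall_ne_lt (f := fun i ω => S i k ω / p k i)
      (hX.mono fun ω h => h k) j,
      hind.measure_forall_ne_lt_of_expMeasure (fun i => (hSmeas i k).div_const _) (hp k) hlaw,
      hpsum k, div_one]
  · have : Nonempty (Fin K) := Fin.pos_iff_nonempty.mp hK
    have hK' : (0 : ℝ) < K := Nat.cast_pos.mpr hK
    have hlaw i : μ.map (fun ω => (⨅ k, S i k ω) / q i) = expMeasure (K * q i) := by
      have hmin : μ.map (fun ω => ⨅ k, S i k ω) = expMeasure K := by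
        simpa using (hSindep.precomp (Prod.mk_right_injective i)).map_iInf_eq_expMeasure
          (hSmeas i) (fun _ => one_pos) (hSexp i)
      exact map_div_const_eq_expMeasure (Measurable.iInf (hSmeas i)) hK' (hq i) hmin
    have hind : iIndepFun (fun i ω => (⨅ k, S i k ω) / q i) μ :=
      (hSindep.curry hSmeas).comp (fun i v => (⨅ k, v k) / q i)
        fun i => (Measurable.iInf measurable_pi_apply).div_const _
    rw [measure_setOf_eq_of_ae_forall_ne_lt (f := fun i ω => (⨅ k, S i k ω) / q i) hY j,
      hind.measure_forall_ne_lt_of_expMeasure (fun i => (Measurable.iInf (hSmeas i)).div_const _)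
        (fun i => mul_pos hK' (hq i)) hlaw,
      ← Finset.mul_sum, hqsum, mul_one, mul_div_cancel_left₀ _ hK'.ne']

/-- **GLS marginal correctness with non-identically distributed proposals.**
Let `p 1, …, p K` be probability mass functions on `{1,…,N}` with `p k i > 0`, and
sample `X k = argmin_i S i k / p k i` while `Y = argmin_i (min_k S i k) / q i` as
before.  Then `Pr[X k = j] = p k j` for all `k, j`, and `Pr[Y = j] = q j` for all
`j`. -/
theorem gls_marginals_non_identical_proposals
    {Ω : Type*} [MeasurableSpace Ω] (μ : Measure Ω) [IsProbabilityMeasure μ]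
    (N K : ℕ) (hN : 0 < N) (hK : 0 < K)
    (q : Fin N → ℝ) (hq : ∀ i, 0 < q i) (hqsum : ∑ i, q i = 1)
    (p : Fin K → Fin N → ℝ) (hp : ∀ k i, 0 < p k i) (hpsum : ∀ k, ∑ i, p k i = 1)
    (S : Fin N → Fin K → Ω → ℝ) (hSmeas : ∀ i k, Measurable (S i k))
    (hSindep : iIndepFun
      (fun ik : Fin N × Fin K => S ik.1 ik.2) μ)
    (hSexp : ∀ i k, μ.map (S i k) = expMeasure 1)
    (Y : Ω → Fin N) (hYmeas : Measurable Y)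
    (X : Fin K → Ω → Fin N) (hXmeas : ∀ k, Measurable (X k))
    -- `Y` is a.s. the unique argmin of `i ↦ (min_k S i k) / q i`
    (hY : ∀ᵐ ω ∂μ, ∀ i : Fin N, i ≠ Y ω →
      (⨅ k : Fin K, S (Y ω) k ω) / q (Y ω) < (⨅ k : Fin K, S i k ω) / q i)
    -- each `X k` is a.s. the unique argmin of `i ↦ S i k / p k i`
    (hX : ∀ᵐ ω ∂μ, ∀ k : Fin K, ∀ i : Fin N, i ≠ X k ω →
      S (X k ω) k ω / p k (X k ω) < S i k ω / p k i) :
    (∀ (k : Fin K) (j : Fin N), μ {ω | X k ω = j} = ENNReal.ofReal (p k j)) ∧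
      (∀ j : Fin N, μ {ω | Y ω = j} = ENNReal.ofReal (q j)) :=
  gls_marginals_non_identical_proposals_general μ N K hK q hq hqsum p hp hpsum S hSmeas hSindep
    hSexp Y X hY hX
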